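/- arXiv:1404.1980 — 2 statements merged into one kernel-verified Lean document; each statement's English description precedes it below -/
import Mathlib

section
/- tr(X^{2r}) = 0 in R for every integer r ≥ 1, where tr denotes the trace of a matrix with entries in R (the sum of the diagonal entries of the matrix power X^{2r}). -/
open ExteriorAlgebra Matrix

/-- The generic matrix `X` whose `(i,j)` entry is the image under `ι` of the
standard basis matrix `E_{ij}` in the exterior algebra on `Mat_n(ℂ)`. -/
noncomputable def genericX (n : ℕ) :
    Matrix (Fin n) (Fin n) (ExteriorAlgebra ℂ (Matrix (Fin n) (Fin n) ℂ)) :=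
  fun i j => ExteriorAlgebra.ι ℂ (Matrix.single i j (1 : ℂ))

/-!
Write `t = tr(X^{2r})` with `2r = k + 1`, `k` odd. Every entry of `X^k` is a sum of products of
`k` generators, so it anticommutes with each generator. Hence
`t = ∑ (X^k)ᵢⱼ Xⱼᵢ = -∑ Xⱼᵢ (X^k)ᵢⱼ = -t`, and `t = 0` because the exterior algebra over `ℂ`
has no `2`-torsion.
-/

namespace Matrix

variable {ι R : Type*} [Fintype ι] [Ring R]

theorem pow_apply_mul_of_forall_anticomm [DecidableEq ι] {M : Matrix ι ι R} {x : R}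
    (hM : ∀ i j, M i j * x = -(x * M i j)) (k : ℕ) (i j : ι) :
    (M ^ k) i j * x = (-1) ^ k * (x * (M ^ k) i j) := by
  induction k generalizing i j with
  | zero => by_cases h : i = j <;> simp [h]
  | succ k ih =>
    simp only [pow_succ, mul_apply, Finset.sum_mul, Finset.mul_sum]
    refine Finset.sum_congr rfl fun l _ => ?_
    calc (M ^ k) i l * M l j * x = -((M ^ k) i l * x * M l j) := by
          rw [mul_assoc, hM, mul_neg, mul_assoc]
      _ = (-1) ^ k * (-1) * (x * ((M ^ k) i l * M l j)) := by
          rw [ih]; noncomm_ring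

theorem trace_mul_eq_neg_trace_mul_swap {A B : Matrix ι ι R}
    (h : ∀ i j k l, A i j * B k l = -(B k l * A i j)) :
    trace (A * B) = -trace (B * A) := by
  simp only [trace, diag, mul_apply, h, Finset.sum_neg_distrib]
  exact congrArg _ Finset.sum_comm

theorem trace_pow_even_eq_zero_of_forall_anticomm [DecidableEq ι] [IsAddTorsionFree R]
    {M : Matrix ι ι R} (hM : ∀ i j k l, M i j * M k l = -(M k l * M i j)) {r : ℕ} (hr : 1 ≤ r) :
    trace (M ^ (2 * r)) = 0 := by
  obtain ⟨k, hk, hodd⟩ : ∃ k, 2 * r = k + 1 ∧ Odd k := ⟨2 * r - 1, by omega, ⟨r - 1, by omega⟩⟩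
  have hanti : ∀ i j a b, (M ^ k) i j * M a b = -(M a b * (M ^ k) i j) := fun i j a b => by
    rw [pow_apply_mul_of_forall_anticomm (hM · · a b), hodd.neg_one_pow, neg_one_mul]
  rw [← self_eq_neg]
  calc trace (M ^ (2 * r)) = trace (M ^ k * M) := by rw [hk, pow_succ]
    _ = -trace (M * M ^ k) := trace_mul_eq_neg_trace_mul_swap hanti
    _ = -trace (M ^ (2 * r)) := by rw [hk, pow_succ']

end Matrix

theorem genericX_apply_mul_apply (n : ℕ) (i j k l : Fin n) :
    genericX n i j * genericX n k l = -(genericX n k l * genericX n i j) :=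
  eq_neg_of_add_eq_zero_left (ι_add_mul_swap _ _)

theorem trace_pow_even_eq_zero_general (n : ℕ) (r : ℕ) (hr : 1 ≤ r) :
    Matrix.trace ((genericX n) ^ (2 * r)) = 0 :=
  have := IsAddTorsionFree.of_isTorsionFree ℂ (ExteriorAlgebra ℂ (Matrix (Fin n) (Fin n) ℂ))
  trace_pow_even_eq_zero_of_forall_anticomm (genericX_apply_mul_apply n) hr

theorem trace_pow_even_eq_zero (n : ℕ) (hn : 0 < n) (r : ℕ) (hr : 1 ≤ r) :
    Matrix.trace ((genericX n) ^ (2 * r)) = 0 :=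
  trace_pow_even_eq_zero_general n r hr
end

section
/- For every integer l ≥ 1 with l ≢ 3 (mod 4), we have tr(A^l) = 0 in R, where tr denotes the trace of a matrix with entries in R. -/
open ExteriorAlgebra Matrix

set_option synthInstance.maxHeartbeats 1000000

/-- The subspace of alternating (skew-symmetric) complex `n × n` matrices. -/
noncomputable def altSubmodule (n : ℕ) : Submodule ℂ (Matrix (Fin n) (Fin n) ℂ) where
  carrier := {M | Mᵀ = -M}
  add_mem' := by
    intro a b ha hb
    simp only [Set.mem_setOf_eq] at *
    rw [Matrix.transpose_add, ha, hb, neg_add]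
  zero_mem' := by simp
  smul_mem' := by
    intro c M hM
    simp only [Set.mem_setOf_eq] at *
    simp [Matrix.transpose_smul, hM]

/-- The generic alternating matrix `A`, whose `(i,j)` entry is the image of
`E_{ij} - E_{ji}` in the exterior algebra on the space of alternating matrices. -/
noncomputable def genericA (n : ℕ) :
    Matrix (Fin n) (Fin n) (ExteriorAlgebra ℂ (altSubmodule n)) :=
  fun i j => ExteriorAlgebra.ι ℂ
    ⟨Matrix.single i j (1 : ℂ) - Matrix.single j i (1 : ℂ), by
      show _ = _
      ext a b
      simp [Matrix.transpose_apply, Matrix.single, and_comm]⟩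

/-!
The entries of `A` have degree one in the exterior algebra, so those of `A ^ l` have degree `l`;
write `t = tr (A ^ l)`. For even `l = m + 1`, the degree-one entries of `A` anticommute with the
odd-degree entries of `A ^ m`, so `tr (A * A ^ m) = -tr (A ^ m * A)`, i.e. `t = -t`.
For `l ≡ 1 (mod 4)`, reversion acts on degree `l` as `(-1) ^ (l choose 2) = 1`, so it fixes `t`.
On the other hand, reversion applied entrywise followed by transposition is an anti-automorphism of
the matrix ring; it sends `A` to `Aᵀ = -A`, hence `t` to `tr ((-A) ^ l) = -t`.
In both cases `t = -t`, which forces `t = 0` in a `ℂ`-vector space.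
-/

namespace ExteriorAlgebra

variable {R M : Type*} [CommRing R] [AddCommGroup M] [Module R M]

theorem mul_ι_of_mem_pow {k : ℕ} {z : ExteriorAlgebra R M}
    (hz : z ∈ LinearMap.range (ι R) ^ k) (x : M) :
    z * ι R x = (-1 : ℤ) ^ k • (ι R x * z) := by
  induction hz using Submodule.pow_induction_on_left' with
  | algebraMap r => rw [pow_zero, one_smul, Algebra.commutes]
  | add _ _ i _ _ iha ihb => rw [add_mul, iha, ihb, mul_add, smul_add]
  | mem_mul _ hm i z _ ih =>
    obtain ⟨v, rfl⟩ := hm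
    calc ι R v * z * ι R x
        = (-1 : ℤ) ^ i • ((ι R v * ι R x) * z) := by
          rw [mul_assoc, ih, mul_smul_comm, mul_assoc]
      _ = (-1 : ℤ) ^ (i + 1) • (ι R x * (ι R v * z)) := by
          rw [← neg_eq_of_add_eq_zero_right (ι_add_mul_swap x v), pow_succ, mul_neg_one,
            neg_smul, neg_mul, smul_neg, mul_assoc]

theorem reverse_eq_of_mem_pow {k : ℕ} {z : ExteriorAlgebra R M}
    (hz : z ∈ LinearMap.range (ι R) ^ k) :
    CliffordAlgebra.reverse (Q := 0) z = (-1 : ℤ) ^ k.choose 2 • z := by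
  induction hz using Submodule.pow_induction_on_left' with
  | algebraMap r => rw [CliffordAlgebra.reverse.commutes, Nat.choose_zero_succ, pow_zero, one_smul]
  | add _ _ i _ _ iha ihb => rw [map_add, iha, ihb, smul_add]
  | mem_mul _ hm i z hz ih =>
    obtain ⟨v, rfl⟩ := hm
    calc CliffordAlgebra.reverse (Q := 0) (ι R v * z)
        = (-1 : ℤ) ^ i.choose 2 • (z * ι R v) := by
          rw [CliffordAlgebra.reverse.map_mul, ih, CliffordAlgebra.reverse_ι, smul_mul_assoc]
      _ = (-1 : ℤ) ^ (i + 1).choose 2 • (ι R v * z) := by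
          rw [mul_ι_of_mem_pow hz, smul_smul, ← pow_add, Nat.choose_succ_succ',
            Nat.choose_one_right, add_comm]

end ExteriorAlgebra

theorem Nat.even_choose_two_of_mod_four_eq_one {l : ℕ} (hl : l % 4 = 1) : Even (l.choose 2) := by
  obtain ⟨q, rfl⟩ : ∃ q, l = 4 * q + 1 := ⟨l / 4, by omega⟩
  rw [Nat.choose_two_right, Nat.add_sub_cancel, show (4 * q + 1) * (4 * q) = 2 * (2 * (q * (4 * q + 1))) by ring,
    Nat.mul_div_cancel_left _ two_pos]
  exact even_two_mul _

namespace Matrix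

variable {m α : Type*} [Fintype m]

theorem pow_apply_mem_pow [DecidableEq m] {R : Type*} [CommSemiring R] [Semiring α]
    [Algebra R α] {S : Submodule R α} {M : Matrix m m α} (hM : ∀ i j, M i j ∈ S) (k : ℕ)
    (i j : m) : (M ^ k) i j ∈ S ^ k := by
  induction k generalizing j with
  | zero =>
    rw [pow_zero, pow_zero, one_apply]
    split_ifs
    · exact Submodule.one_le.mp le_rfl
    · exact zero_mem _
  | succ k ih =>
    rw [pow_succ, pow_succ, mul_apply]
    exact Submodule.sum_mem _ fun c _ => Submodule.mul_mem_mul (ih c) (hM c j)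

theorem trace_mul_eq_neg_trace_mul_of_anticomm [NonUnitalNonAssocRing α] {M N : Matrix m m α}
    (h : ∀ i j k l, M i j * N k l = -(N k l * M i j)) : trace (M * N) = -trace (N * M) := by
  simp only [Matrix.trace, diag, mul_apply, h, Finset.sum_neg_distrib]
  rw [Finset.sum_comm]

theorem transpose_map_unop_pow [DecidableEq m] [Semiring α] (f : α →+* αᵐᵒᵖ) (M : Matrix m m α)
    (k : ℕ) :
    ((M ^ k).map fun x => (f x).unop)ᵀ = (M.map fun x => (f x).unop)ᵀ ^ k := by
  have := congrArg MulOpposite.unop (map_pow (RingEquiv.mopMatrix.toRingHom.comp f.mapMatrix) M k)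
  simp only [RingHom.comp_apply, RingHom.mapMatrix_apply, RingEquiv.toRingHom_eq_coe,
    RingEquiv.coe_toRingHom, RingEquiv.mopMatrix_apply, MulOpposite.unop_pow, MulOpposite.unop_op,
    transpose_map, map_map] at this
  exact this

theorem trace_transpose_map_unop_pow [DecidableEq m] [Semiring α] (f : α →+* αᵐᵒᵖ)
    (M : Matrix m m α) (k : ℕ) :
    trace ((M.map fun x => (f x).unop)ᵀ ^ k) = (f (trace (M ^ k))).unop := by
  rw [← transpose_map_unop_pow, trace_transpose]
  simp [Matrix.trace, map_sum]

end Matrix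

section GenericA

variable (n : ℕ)

theorem genericA_apply_mem_range (i j : Fin n) :
    genericA n i j ∈ LinearMap.range (ι ℂ) := ⟨_, rfl⟩

theorem genericA_transpose : (genericA n)ᵀ = -genericA n := by
  ext i j
  rw [transpose_apply, neg_apply, genericA, genericA, ← map_neg]
  congr 1
  exact Subtype.ext (neg_sub _ _).symm

theorem genericA_map_reverse :
    (genericA n).map (CliffordAlgebra.reverse (Q := 0)) = genericA n := by
  ext i j
  exact CliffordAlgebra.reverse_ι _

end GenericA

theorem trace_genericA_pow_eq_zero_general (n : ℕ) (l : ℕ) (hl : 1 ≤ l)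
    (hl4 : l % 4 ≠ 3) :
    Matrix.trace ((genericA n) ^ l) = 0 := by
  have hA := genericA_apply_mem_range n
  set A := genericA n
  have : IsAddTorsionFree (ExteriorAlgebra ℂ (altSubmodule n)) := .of_isTorsionFree ℂ _
  refine self_eq_neg.mp ?_
  rcases Nat.even_or_odd l with hl_even | hl_odd
  · obtain ⟨m, rfl⟩ : ∃ m, l = m + 1 := ⟨l - 1, by omega⟩
    have hm : Odd m := Nat.not_even_iff_odd.mp (Nat.even_add_one.mp hl_even)
    have hanti : ∀ i j k k', A i j * (A ^ m) k k' = -((A ^ m) k k' * A i j) := by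
      intro i j k k'
      obtain ⟨x, hx⟩ := hA i j
      rw [← hx, ExteriorAlgebra.mul_ι_of_mem_pow (pow_apply_mem_pow hA m k k'), hm.neg_one_pow,
        neg_one_smul, neg_neg]
    calc trace (A ^ (m + 1)) = trace (A * A ^ m) := by rw [pow_succ']
      _ = -trace (A ^ m * A) := trace_mul_eq_neg_trace_mul_of_anticomm hanti
      _ = -trace (A ^ (m + 1)) := by rw [pow_succ]
  · have hl1 : l % 4 = 1 := by have := Nat.odd_iff.mp hl_odd; omega
    have hdeg : trace (A ^ l) ∈ LinearMap.range (ι ℂ) ^ l :=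
      Submodule.sum_mem _ fun i _ => pow_apply_mem_pow hA l i i
    calc trace (A ^ l) = CliffordAlgebra.reverse (Q := 0) (trace (A ^ l)) := by
          rw [ExteriorAlgebra.reverse_eq_of_mem_pow hdeg,
            (Nat.even_choose_two_of_mod_four_eq_one hl1).neg_one_pow, one_smul]
      _ = trace ((A.map (CliffordAlgebra.reverse (Q := 0)))ᵀ ^ l) :=
          (trace_transpose_map_unop_pow CliffordAlgebra.reverseOp.toRingHom A l).symm
      _ = -trace (A ^ l) := by
          rw [genericA_map_reverse, genericA_transpose, hl_odd.neg_pow, trace_neg]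

theorem trace_genericA_pow_eq_zero (n : ℕ) (hn : 0 < n) (l : ℕ) (hl : 1 ≤ l)
    (hl4 : l % 4 ≠ 3) :
    Matrix.trace ((genericA n) ^ l) = 0 :=
  trace_genericA_pow_eq_zero_general n l hl hl4
end
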